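/- (Hamiltonian change in the Jacobi-type dynamic iteration.) Let E ∈ ℝ^{k×n}, J ∈ ℝ^{k×k}, B̄ ∈ ℝ^{k×m̄}, and S ∈ ℝ^{k×k} skew-symmetric (in the application S = B̂ Ĉ B̂ᵀ, where Ĉ is the interconnection matrix and B̂ the coupling port matrix, and only the Schur complement S is required to be skew-symmetric). Let z : ℝ^n → ℝ^k and r : ℝ^k → ℝ^k be continuous, let V ⊆ ℝ^k be a subspace on which J is skew-symmetric, and let H be continuously differentiable with ∇H(x) = Eᵀ z(x) whenever z(x) ∈ V. Let z_old : [t, t+h] → ℝ^k (the effort of the previous iterate) and ū : [t, t+h] → ℝ^{m̄} be continuous, and let x : [t, t+h] → ℝ^n be differentiable with z∘x continuous, satisfying z(x(τ)) ∈ V and d/dτ (E x(τ)) = (J − S) z(x(τ)) − r(z(x(τ))) + S ( z(x(τ)) − z_old(τ) ) + B̄ ū(τ) for all τ. Then H(x(t+h)) − H(x(t)) = ∫_t^{t+h} ( −z(x(τ))ᵀ r(z(x(τ))) + ū(τ)ᵀ B̄ᵀ z(x(τ)) − ( z(x(τ)) − z_old(τ) )ᵀ S z_old(τ) ) dτ.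 -/

import Mathlib

/-!
Along a solution, `d/dτ H(x) = ∇H(x) ⬝ x' = z ⬝ (E x')`, and substituting the state equation
leaves only the dissipation, the supply through `B̄` and the coupling term: `z ⬝ J z` vanishes by
skew-symmetry of `J` on `V`, the two `z ⬝ S z` terms cancel, and `-(z - z_old) ⬝ S z_old` differs
from `-z ⬝ S z_old` only by `z_old ⬝ S z_old = 0`. The fundamental theorem of calculus then gives
the claimed change of `H`.
-/

open Matrix MeasureTheory

theorem Matrix.dotProduct_mulVec_self_eq_zero_of_transpose_eq_neg {ι R : Type*} [Fintype ι]
    [CommRing R] [NoZeroDivisors R] [CharZero R] {S : Matrix ι ι R} (hS : Sᵀ = -S)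
    (v : ι → R) : v ⬝ᵥ S *ᵥ v = 0 := by
  have h : v ⬝ᵥ S *ᵥ v = -(v ⬝ᵥ S *ᵥ v) := by
    conv_lhs => rw [← dotProduct_transpose_mulVec, hS, neg_mulVec, dotProduct_neg]
  exact CharZero.eq_neg_self_iff.mp h

theorem ContinuousOn.dotProduct {α ι R : Type*} [TopologicalSpace α] [TopologicalSpace R]
    [Fintype ι] [Mul R] [AddCommMonoid R] [ContinuousAdd R] [ContinuousMul R]
    {s : Set α} {f g : α → ι → R} (hf : ContinuousOn f s) (hg : ContinuousOn g s) :
    ContinuousOn (fun a => f a ⬝ᵥ g a) s :=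
  (continuous_fst.dotProduct continuous_snd).comp_continuousOn (hf.prodMk hg)

/-- The power balance of the iteration at one instant, with `ρ` standing for `r(z)`. -/
theorem dotProduct_jacobi_rhs_eq {ι κ R : Type*} [Fintype ι] [Fintype κ] [CommRing R]
    (J S : Matrix ι ι R) (Bb : Matrix ι κ R) {z zold : ι → R} (ρ : ι → R) (u : κ → R)
    (hJ : z ⬝ᵥ J *ᵥ z = 0) (hS : zold ⬝ᵥ S *ᵥ zold = 0) :
    z ⬝ᵥ ((J - S) *ᵥ z - ρ + S *ᵥ (z - zold) + Bb *ᵥ u) =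
      -(z ⬝ᵥ ρ) + u ⬝ᵥ Bbᵀ *ᵥ z - (z - zold) ⬝ᵥ S *ᵥ zold := by
  rw [dotProduct_transpose_mulVec]
  simp only [sub_mulVec, mulVec_sub, dotProduct_add, dotProduct_sub, sub_dotProduct]
  rw [hJ, hS]
  ring

theorem jacobi_iteration_hamiltonian_change_general {k n mb : ℕ}
    (E : Matrix (Fin k) (Fin n) ℝ) (J : Matrix (Fin k) (Fin k) ℝ)
    (Bb : Matrix (Fin k) (Fin mb) ℝ)
    (S : Matrix (Fin k) (Fin k) ℝ) (hS : S.transpose = -S)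
    (z : (Fin n → ℝ) → (Fin k → ℝ)) (r : (Fin k → ℝ) → (Fin k → ℝ))
    (hr : Continuous r)
    (V : Submodule ℝ (Fin k → ℝ))
    (hJ : ∀ v ∈ V, ∀ w ∈ V, v ⬝ᵥ J.mulVec w = -(w ⬝ᵥ J.mulVec v))
    (H : (Fin n → ℝ) → ℝ) (hH : ContDiff ℝ 1 H)
    (hgrad : ∀ x, z x ∈ V → ∀ w, fderiv ℝ H x w = E.transpose.mulVec (z x) ⬝ᵥ w)
    (t h : ℝ) (hh : 0 ≤ h)
    (zold : ℝ → Fin k → ℝ) (hzold : ContinuousOn zold (Set.Icc t (t + h)))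
    (ub : ℝ → Fin mb → ℝ) (hub : ContinuousOn ub (Set.Icc t (t + h)))
    (x : ℝ → Fin n → ℝ) (x' : ℝ → Fin n → ℝ)
    (hx : ∀ τ ∈ Set.Icc t (t + h), HasDerivAt x (x' τ) τ)
    (hzx : ContinuousOn (fun τ => z (x τ)) (Set.Icc t (t + h)))
    (hmem : ∀ τ ∈ Set.Icc t (t + h), z (x τ) ∈ V)
    (hode : ∀ τ ∈ Set.Icc t (t + h),
      E.mulVec (x' τ) = (J - S).mulVec (z (x τ)) - r (z (x τ)) +
        S.mulVec (z (x τ) - zold τ) + Bb.mulVec (ub τ)) :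
    H (x (t + h)) - H (x t) =
      ∫ τ in t..(t + h),
        (-(z (x τ) ⬝ᵥ r (z (x τ))) + ub τ ⬝ᵥ Bb.transpose.mulVec (z (x τ)) -
          (z (x τ) - zold τ) ⬝ᵥ S.mulVec (zold τ)) := by
  have hIcc : Set.uIcc t (t + h) = Set.Icc t (t + h) :=
    Set.uIcc_of_le (le_add_of_nonneg_right hh)
  symm
  apply intervalIntegral.integral_eq_sub_of_hasDerivAt (f := fun τ => H (x τ))
  · intro τ hτ
    rw [hIcc] at hτ
    have hJz : z (x τ) ⬝ᵥ J *ᵥ z (x τ) = 0 :=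
      CharZero.eq_neg_self_iff.mp (hJ _ (hmem τ hτ) _ (hmem τ hτ))
    have hchain := (hH.differentiable one_ne_zero _).hasFDerivAt.comp_hasDerivAt τ (hx τ hτ)
    rwa [hgrad _ (hmem τ hτ), dotProduct_comm, dotProduct_transpose_mulVec, hode τ hτ,
      dotProduct_jacobi_rhs_eq J S Bb _ _ hJz
        (dotProduct_mulVec_self_eq_zero_of_transpose_eq_neg hS _)] at hchain
  · refine ContinuousOn.intervalIntegrable (hIcc ▸ ?_)
    have hmulVec {m : ℕ} (A : Matrix (Fin m) (Fin k) ℝ) : Continuous (A *ᵥ ·) :=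
      continuous_const.matrix_mulVec continuous_id
    exact ((hzx.dotProduct (hr.comp_continuousOn hzx)).neg.add
      (hub.dotProduct ((hmulVec Bbᵀ).comp_continuousOn hzx))).sub
      ((hzx.sub hzold).dotProduct ((hmulVec S).comp_continuousOn hzold))

/-- Hamiltonian change in the Jacobi-type dynamic iteration.  With skew-symmetric
Schur complement `S = B̂ Ĉ B̂ᵀ`, along a solution of
`d/dτ (E x) = (J − S) z(x) − r(z(x)) + S (z(x) − z_old) + B̄ ū` one has
`H(x(t+h)) − H(x(t)) = ∫ (−z(x)ᵀ r(z(x)) + ūᵀ B̄ᵀ z(x) − (z(x) − z_old)ᵀ S z_old)`. -/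
theorem jacobi_iteration_hamiltonian_change {k n mb : ℕ}
    (E : Matrix (Fin k) (Fin n) ℝ) (J : Matrix (Fin k) (Fin k) ℝ)
    (Bb : Matrix (Fin k) (Fin mb) ℝ)
    (S : Matrix (Fin k) (Fin k) ℝ) (hS : S.transpose = -S)
    (z : (Fin n → ℝ) → (Fin k → ℝ)) (r : (Fin k → ℝ) → (Fin k → ℝ))
    (hz : Continuous z) (hr : Continuous r)
    (V : Submodule ℝ (Fin k → ℝ))
    (hJ : ∀ v ∈ V, ∀ w ∈ V, v ⬝ᵥ J.mulVec w = -(w ⬝ᵥ J.mulVec v))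
    (H : (Fin n → ℝ) → ℝ) (hH : ContDiff ℝ 1 H)
    (hgrad : ∀ x, z x ∈ V → ∀ w, fderiv ℝ H x w = E.transpose.mulVec (z x) ⬝ᵥ w)
    (t h : ℝ) (hh : 0 ≤ h)
    (zold : ℝ → Fin k → ℝ) (hzold : ContinuousOn zold (Set.Icc t (t + h)))
    (ub : ℝ → Fin mb → ℝ) (hub : ContinuousOn ub (Set.Icc t (t + h)))
    (x : ℝ → Fin n → ℝ) (x' : ℝ → Fin n → ℝ)
    (hx : ∀ τ ∈ Set.Icc t (t + h), HasDerivAt x (x' τ) τ)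
    (hzx : ContinuousOn (fun τ => z (x τ)) (Set.Icc t (t + h)))
    (hmem : ∀ τ ∈ Set.Icc t (t + h), z (x τ) ∈ V)
    (hode : ∀ τ ∈ Set.Icc t (t + h),
      E.mulVec (x' τ) = (J - S).mulVec (z (x τ)) - r (z (x τ)) +
        S.mulVec (z (x τ) - zold τ) + Bb.mulVec (ub τ)) :
    H (x (t + h)) - H (x t) =
      ∫ τ in t..(t + h),
        (-(z (x τ) ⬝ᵥ r (z (x τ))) + ub τ ⬝ᵥ Bb.transpose.mulVec (z (x τ)) -
          (z (x τ) - zold τ) ⬝ᵥ S.mulVec (zold τ)) :=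
  jacobi_iteration_hamiltonian_change_general E J Bb S hS z r hr V hJ H hH hgrad t h hh zold hzold
    ub hub x x' hx hzx hmem hode
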